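/- Let f_1, …, f_n ∈ k[x] satisfy k[f_1,…,f_n] = k[x], and let w ∈ Γ^n. Then f_1^w, …, f_n^w are algebraically independent over k if and only if k[f_1^w,…,f_n^w] = k[x]. -/

import Mathlib

open MvPolynomial Polynomial

set_option synthInstance.maxHeartbeats 1000000
set_option maxHeartbeats 1000000

variable {k : Type*} [Field k] [CharZero k] {n : ℕ}
variable {Γ : Type*} [AddCommGroup Γ] [LinearOrder Γ] [IsOrderedAddMonoid Γ]

/-- The `w`-degree of a multivariate polynomial, with `wdeg w 0 = ⊥ = -∞`. -/
noncomputable def wdeg (w : Fin n → Γ) (f : MvPolynomial (Fin n) k) : WithBot Γ :=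
  f.support.sup fun d => ((∑ i, d i • w i : Γ) : WithBot Γ)

/-- The leading `w`-homogeneous form `f^w` of `f`. -/
noncomputable def lform (w : Fin n → Γ) (f : MvPolynomial (Fin n) k) :
    MvPolynomial (Fin n) k :=
  letI : DecidableEq (WithBot Γ) := Classical.decEq _
  ∑ d ∈ f.support.filter
      (fun d => ((∑ i, d i • w i : Γ) : WithBot Γ) = wdeg w f),
    MvPolynomial.monomial d (f.coeff d)

/-- `deg_w^g Φ = max_i deg_w (φ_i g^i)` for `Φ = Σ_i φ_i y^i`. -/
noncomputable def wdegG (w : Fin n → Γ) (g : MvPolynomial (Fin n) k)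
    (Φ : Polynomial (MvPolynomial (Fin n) k)) : WithBot Γ :=
  Φ.support.sup fun i => wdeg w (Φ.coeff i * g ^ i)

/-- The leading form `Φ^{w,g}` of `Φ` for the grading in which `x_j` has weight `w_j`
and `y` has weight `deg_w g`: the sum of `φ_i^w y^i` over those `i` with
`deg_w (φ_i g^i) = deg_w^g Φ`. -/
noncomputable def pLform (w : Fin n → Γ) (g : MvPolynomial (Fin n) k)
    (Φ : Polynomial (MvPolynomial (Fin n) k)) : Polynomial (MvPolynomial (Fin n) k) :=
  letI : DecidableEq (WithBot Γ) := Classical.decEq _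
  ∑ i ∈ Φ.support.filter (fun i => wdeg w (Φ.coeff i * g ^ i) = wdegG w g Φ),
    Polynomial.C (lform w (Φ.coeff i)) * Polynomial.X ^ i

/-- `m_w^g(Φ) = min { i : deg_w^g (∂_y^i Φ) = deg_w ((∂_y^i Φ)(g)) }`. -/
noncomputable def mwg (w : Fin n → Γ) (g : MvPolynomial (Fin n) k)
    (Φ : Polynomial (MvPolynomial (Fin n) k)) : ℕ :=
  sInf {i : ℕ |
    wdegG w g (Polynomial.derivative^[i] Φ) = wdeg w ((Polynomial.derivative^[i] Φ).eval g)}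

/-- The `w`-degree of the differential form `dh_1 ∧ ⋯ ∧ dh_s`: the maximum over all
`s`-tuples of indices of the `w`-degree of the corresponding `s × s` Jacobian minor
plus the sum of the corresponding weights (noninjective tuples contribute `⊥`). -/
noncomputable def wedgeDeg (w : Fin n → Γ) {s : ℕ} (h : Fin s → MvPolynomial (Fin n) k) :
    WithBot Γ :=
  Finset.univ.sup fun e : Fin s → Fin n =>
    wdeg w (Matrix.det (Matrix.of fun a b : Fin s => MvPolynomial.pderiv (e b) (h a)))
      + ((∑ b, w (e b) : Γ) : WithBot Γ)

/-- The initial algebra `A^w`: the `k`-subalgebra generated by `f^w` for `f ∈ A \ {0}`. -/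
noncomputable def initAlg (w : Fin n → Γ) (A : Subalgebra k (MvPolynomial (Fin n) k)) :
    Subalgebra k (MvPolynomial (Fin n) k) :=
  Algebra.adjoin k (lform w '' ((A : Set (MvPolynomial (Fin n) k)) \ {0}))

/-- The field of fractions `K^w` of `A^w`, realized as a subfield of the fraction field
of `k[x]`. -/
noncomputable def KW (w : Fin n → Γ) (A : Subalgebra k (MvPolynomial (Fin n) k)) :
    Subfield (FractionRing (MvPolynomial (Fin n) k)) :=
  Subfield.closure
    (algebraMap (MvPolynomial (Fin n) k) (FractionRing (MvPolynomial (Fin n) k)) ''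
      (initAlg w A : Set (MvPolynomial (Fin n) k)))

/-- The field of fractions of a subalgebra `A` of `k[x]`, realized as a subfield of the
fraction field of `k[x]`. -/
noncomputable def fracSub (A : Subalgebra k (MvPolynomial (Fin n) k)) :
    Subfield (FractionRing (MvPolynomial (Fin n) k)) :=
  Subfield.closure
    (algebraMap (MvPolynomial (Fin n) k) (FractionRing (MvPolynomial (Fin n) k)) ''
      (A : Set (MvPolynomial (Fin n) k)))

/-- A polynomial is `w`-homogeneous if all its monomials have the same `w`-degree. -/
def IsWHom (w : Fin n → Γ) (f : MvPolynomial (Fin n) k) : Prop :=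
  ∃ γ : Γ, ∀ d ∈ f.support, (∑ i, d i • w i : Γ) = γ


/-! Put `γ i = deg_w f_i`. For any polynomial `P`, with top `γ`-weighted component `Q`, the
polynomial `Q(f^w)` is the `w`-leading form of `P(f)` unless it vanishes. If the `f_i^w` are
algebraically independent it does not vanish, so writing `x_j = P(f)` gives
`x_j = (x_j)^w = Q(f^w) ∈ k[f^w]`. Conversely, if `k[f^w] = k[x]` then the substitution
`x_i ↦ f_i^w` is a surjective endomorphism of the Noetherian ring `k[x]`, hence injective. -/

open Finsupp (weight)

theorem RingHom.injective_of_surjective_of_isNoetherianRing {A : Type*} [Ring A]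
    [IsNoetherianRing A] (φ : A →+* A) (hφ : Function.Surjective φ) : Function.Injective φ := by
  have hker : ∀ i : ℕ, RingHom.ker (φ ^ i) ≤ RingHom.ker (φ ^ (i + 1)) := fun i a ha => by
    rw [RingHom.mem_ker] at ha ⊢
    rw [pow_succ', RingHom.coe_mul, Function.comp_apply, ha, map_zero]
  obtain ⟨N, hN⟩ := monotone_stabilizes_iff_noetherian.mpr inferInstance
    ⟨_, monotone_nat_of_le_succ hker⟩
  refine (injective_iff_map_eq_zero φ).mpr fun a ha => ?_
  obtain ⟨b, rfl⟩ := (RingHom.coe_pow φ N ▸ hφ.iterate N) a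
  have hb : b ∈ RingHom.ker (φ ^ (N + 1)) := by
    rwa [RingHom.mem_ker, pow_succ', RingHom.coe_mul, Function.comp_apply]
  have hstable : RingHom.ker (φ ^ N) = RingHom.ker (φ ^ (N + 1)) := hN (N + 1) N.le_succ
  exact RingHom.mem_ker.mp (hstable ▸ hb)

namespace MvPolynomial

section WeightedLeadingForm

variable {R σ M : Type*} [CommRing R] [AddCommMonoid M] [LinearOrder M] {w : σ → M}

/-- `h = 0` is allowed (then every monomial of `p` has weight `< m`); this makes the notion
closed under sums. -/
def IsWeightedLeadingForm (w : σ → M) (m : M) (p h : MvPolynomial σ R) : Prop :=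
  IsWeightedHomogeneous w h m ∧ ∀ ⦃d⦄, coeff d (p - h) ≠ 0 → weight w d < m

lemma weight_le_weightedTotalDegree' {p : MvPolynomial σ R} {d : σ →₀ ℕ} (hd : d ∈ p.support) :
    (weight w d : WithBot M) ≤ weightedTotalDegree' w p :=
  Finset.le_sup (f := fun d => (weight w d : WithBot M)) hd

lemma isWeightedLeadingForm_weightedHomogeneousComponent {p : MvPolynomial σ R} {m : M}
    (hp : weightedTotalDegree' w p ≤ m) :
    IsWeightedLeadingForm w m p (weightedHomogeneousComponent w m p) := by
  classical
  refine ⟨weightedHomogeneousComponent_isWeightedHomogeneous m p, fun d hd => ?_⟩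
  rw [coeff_sub, coeff_weightedHomogeneousComponent] at hd
  split_ifs at hd with hdm
  · exact absurd (sub_self _) hd
  · rw [sub_zero] at hd
    exact lt_of_le_of_ne
      (WithBot.coe_le_coe.mp ((weight_le_weightedTotalDegree' (mem_support_iff.mpr hd)).trans hp))
      hdm

lemma weightedHomogeneousComponent_ne_zero {p : MvPolynomial σ R} {m : M}
    (hp : weightedTotalDegree' w p = m) : weightedHomogeneousComponent w m p ≠ 0 := by
  classical
  have hne : p.support.Nonempty := by
    rw [Finset.nonempty_iff_ne_empty]
    rintro h
    simp [weightedTotalDegree', h] at hp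
  obtain ⟨d, hd, hdm⟩ := Finset.exists_mem_eq_sup _ hne (fun d => (weight w d : WithBot M))
  intro h0
  have := congr_arg (coeff d) h0
  rw [coeff_weightedHomogeneousComponent, if_pos (WithBot.coe_injective (hdm.symm.trans hp)),
    coeff_zero] at this
  exact mem_support_iff.mp hd this

namespace IsWeightedLeadingForm

variable {m m' : M} {p q h j : MvPolynomial σ R}

lemma weight_le (hp : IsWeightedLeadingForm w m p h) {d : σ →₀ ℕ} (hd : coeff d p ≠ 0) :
    weight w d ≤ m := by
  rcases ne_or_eq (coeff d h) 0 with hh | hh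
  · exact (hp.1 hh).le
  · exact (hp.2 (by rwa [coeff_sub, hh, sub_zero])).le

lemma weightedHomogeneousComponent_eq (hp : IsWeightedLeadingForm w m p h) :
    weightedHomogeneousComponent w m p = h := by
  classical
  ext d
  rw [coeff_weightedHomogeneousComponent]
  split_ifs with hd
  · by_contra hne
    exact (hp.2 (by rwa [coeff_sub, sub_ne_zero])).ne hd
  · by_contra hne
    exact hd (hp.1 (Ne.symm hne))

lemma weightedTotalDegree'_eq (hp : IsWeightedLeadingForm w m p h) (h0 : h ≠ 0) :
    weightedTotalDegree' w p = m := by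
  obtain ⟨d, hd⟩ := exists_coeff_ne_zero h0
  have hdm := hp.1 hd
  have hpd : coeff d p ≠ 0 := by
    rwa [← hp.weightedHomogeneousComponent_eq, coeff_weightedHomogeneousComponent,
      if_pos hdm] at hd
  refine le_antisymm (Finset.sup_le fun d hd => ?_) ?_
  · exact WithBot.coe_le_coe.mpr (hp.weight_le (mem_support_iff.mp hd))
  · rw [← hdm]
    exact weight_le_weightedTotalDegree' (mem_support_iff.mpr hpd)

lemma add (hp : IsWeightedLeadingForm w m p h) (hq : IsWeightedLeadingForm w m q j) :
    IsWeightedLeadingForm w m (p + q) (h + j) := by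
  refine ⟨hp.1.add hq.1, fun d hd => ?_⟩
  rw [add_sub_add_comm, coeff_add] at hd
  rcases ne_or_eq (coeff d (p - h)) 0 with hd' | hd'
  · exact hp.2 hd'
  · exact hq.2 (by rwa [hd', zero_add] at hd)

lemma sum {ι : Type*} (s : Finset ι) {p h : ι → MvPolynomial σ R}
    (hp : ∀ i ∈ s, IsWeightedLeadingForm w m (p i) (h i)) :
    IsWeightedLeadingForm w m (∑ i ∈ s, p i) (∑ i ∈ s, h i) := by
  classical
  induction s using Finset.induction_on with
  | empty => exact ⟨isWeightedHomogeneous_zero R w m, fun _ hd => absurd (by simp) hd⟩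
  | insert i s hi ih =>
    rw [Finset.sum_insert hi, Finset.sum_insert hi]
    exact (hp i (s.mem_insert_self i)).add (ih fun j hj => hp j (Finset.mem_insert_of_mem hj))

lemma C_mul (hp : IsWeightedLeadingForm w m p h) (c : R) :
    IsWeightedLeadingForm w m (C c * p) (C c * h) := by
  refine ⟨hp.1.C_mul c, fun d hd => hp.2 ?_⟩
  rw [← mul_sub, coeff_C_mul] at hd
  exact right_ne_zero_of_mul hd

lemma zero_of_lt (hp : IsWeightedLeadingForm w m p h) (hm : m < m') :
    IsWeightedLeadingForm w m' p 0 :=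
  ⟨isWeightedHomogeneous_zero R w m',
    fun _ hd => (hp.weight_le (by rwa [sub_zero] at hd)).trans_lt hm⟩

lemma one : IsWeightedLeadingForm w 0 (1 : MvPolynomial σ R) 1 :=
  ⟨isWeightedHomogeneous_one R w, fun _ hd => absurd (by rw [sub_self, coeff_zero]) hd⟩

variable [IsOrderedCancelAddMonoid M]

lemma mul (hp : IsWeightedLeadingForm w m p h) (hq : IsWeightedLeadingForm w m' q j) :
    IsWeightedLeadingForm w (m + m') (p * q) (h * j) := by
  classical
  have hmul_lt : ∀ {a b : MvPolynomial σ R} {m m' : M},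
      (∀ ⦃d⦄, coeff d a ≠ 0 → weight w d < m) → (∀ ⦃d⦄, coeff d b ≠ 0 → weight w d ≤ m') →
      ∀ ⦃d⦄, coeff d (a * b) ≠ 0 → weight w d < m + m' := by
    intro a b m m' ha hb d hd
    obtain ⟨d₁, hd₁, d₂, hd₂, rfl⟩ :=
      Finset.mem_add.mp (support_mul a b (mem_support_iff.mpr hd))
    rw [map_add]
    exact add_lt_add_of_lt_of_le (ha (mem_support_iff.mp hd₁)) (hb (mem_support_iff.mp hd₂))
  refine ⟨hp.1.mul hq.1, fun d hd => ?_⟩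
  rw [show p * q - h * j = (p - h) * q + (q - j) * h by ring, coeff_add] at hd
  rcases ne_or_eq (coeff d ((p - h) * q)) 0 with hd' | hd'
  · exact hmul_lt hp.2 (fun _ => hq.weight_le) hd'
  · rw [add_comm m]
    exact hmul_lt hq.2 (fun _ hc => (hp.1 hc).le) (by rwa [hd', zero_add] at hd)

lemma pow (hp : IsWeightedLeadingForm w m p h) (k : ℕ) :
    IsWeightedLeadingForm w (k • m) (p ^ k) (h ^ k) := by
  induction k with
  | zero => simpa using one
  | succ k ih => simpa [pow_succ, succ_nsmul] using ih.mul hp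

lemma prod {ι : Type*} (s : Finset ι) {m : ι → M} {p h : ι → MvPolynomial σ R}
    (hp : ∀ i ∈ s, IsWeightedLeadingForm w (m i) (p i) (h i)) :
    IsWeightedLeadingForm w (∑ i ∈ s, m i) (∏ i ∈ s, p i) (∏ i ∈ s, h i) := by
  classical
  induction s using Finset.induction_on with
  | empty => simpa using one
  | insert i s hi ih =>
    rw [Finset.sum_insert hi, Finset.prod_insert hi, Finset.prod_insert hi]
    exact (hp i (s.mem_insert_self i)).mul (ih fun j hj => hp j (Finset.mem_insert_of_mem hj))

end IsWeightedLeadingForm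

variable [IsOrderedCancelAddMonoid M] {τ : Type*} {f g : τ → MvPolynomial σ R} {γ : τ → M}

lemma isWeightedLeadingForm_aeval_monomial
    (hfg : ∀ i, IsWeightedLeadingForm w (γ i) (f i) (g i)) (d : τ →₀ ℕ) (c : R) :
    IsWeightedLeadingForm w (weight γ d) (aeval f (monomial d c)) (aeval g (monomial d c)) := by
  simp only [aeval_monomial, algebraMap_eq, Finsupp.prod, Finsupp.weight_apply, Finsupp.sum]
  exact (IsWeightedLeadingForm.prod d.support fun i _ => (hfg i).pow (d i)).C_mul c

theorem isWeightedLeadingForm_aeval (hfg : ∀ i, IsWeightedLeadingForm w (γ i) (f i) (g i))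
    {P : MvPolynomial τ R} {μ : M} (hP : weightedTotalDegree' γ P ≤ μ) :
    IsWeightedLeadingForm w μ (aeval f P) (aeval g (weightedHomogeneousComponent γ μ P)) := by
  classical
  rw [weightedHomogeneousComponent_apply, map_sum, Finset.sum_filter]
  nth_rewrite 1 [P.as_sum]
  rw [map_sum]
  refine IsWeightedLeadingForm.sum _ fun d hd => ?_
  have hdμ : weight γ d ≤ μ := WithBot.coe_le_coe.mp ((weight_le_weightedTotalDegree' hd).trans hP)
  split_ifs with hd
  · exact hd ▸ isWeightedLeadingForm_aeval_monomial hfg d _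
  · exact (isWeightedLeadingForm_aeval_monomial hfg d _).zero_of_lt (lt_of_le_of_ne hdμ hd)

end WeightedLeadingForm

end MvPolynomial

section LeadingForm

variable {K : Type*} [Field K] {G : Type*} [AddCommGroup G] [LinearOrder G]

lemma wdeg_eq_weightedTotalDegree' (w : Fin n → G) (p : MvPolynomial (Fin n) K) :
    wdeg w p = weightedTotalDegree' w p :=
  Finset.sup_congr rfl fun d _ => by rw [Finsupp.weight_eq_sum]

lemma lform_eq_weightedHomogeneousComponent {w : Fin n → G} {p : MvPolynomial (Fin n) K} {m : G}
    (hp : wdeg w p = m) : lform w p = weightedHomogeneousComponent w m p := by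
  classical
  rw [lform, weightedHomogeneousComponent_apply]
  refine Finset.sum_congr ?_ fun _ _ => rfl
  ext d
  simp only [Finset.mem_filter, hp, WithBot.coe_inj, Finsupp.weight_eq_sum]

lemma lform_zero (w : Fin n → G) : lform w (0 : MvPolynomial (Fin n) K) = 0 := by
  simp [lform]

lemma exists_isWeightedLeadingForm_lform (w : Fin n → G) (p : MvPolynomial (Fin n) K) :
    ∃ m, IsWeightedLeadingForm w m p (lform w p) := by
  rcases eq_or_ne p 0 with rfl | hp
  · rw [lform_zero]
    exact ⟨0, isWeightedHomogeneous_zero K w 0, fun _ hd => absurd (by simp) hd⟩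
  obtain ⟨m, hm⟩ := WithBot.ne_bot_iff_exists.mp ((weightedTotalDegree'_eq_bot_iff w p).not.mpr hp)
  rw [lform_eq_weightedHomogeneousComponent (by rw [wdeg_eq_weightedTotalDegree', ← hm])]
  exact ⟨m, isWeightedLeadingForm_weightedHomogeneousComponent hm.ge⟩

lemma MvPolynomial.IsWeightedLeadingForm.lform_eq {w : Fin n → G} {m : G}
    {p h : MvPolynomial (Fin n) K} (hp : IsWeightedLeadingForm w m p h) (h0 : h ≠ 0) :
    lform w p = h := by
  rw [lform_eq_weightedHomogeneousComponent (by
    rw [wdeg_eq_weightedTotalDegree', hp.weightedTotalDegree'_eq h0]),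
    hp.weightedHomogeneousComponent_eq]

lemma lform_X (w : Fin n → G) (j : Fin n) : lform w (X j : MvPolynomial (Fin n) K) = X j :=
  IsWeightedLeadingForm.lform_eq (m := w j)
    ⟨isWeightedHomogeneous_X K w j, fun _ hd => absurd (by simp) hd⟩ (X_ne_zero j)

theorem lform_mem_adjoin_lform [IsOrderedAddMonoid G] {ι : Type*} {w : Fin n → G}
    {f : ι → MvPolynomial (Fin n) K} (hI : AlgebraicIndependent K fun i => lform w (f i))
    {p : MvPolynomial (Fin n) K} (hp : p ∈ Algebra.adjoin K (Set.range f)) :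
    lform w p ∈ Algebra.adjoin K (Set.range fun i => lform w (f i)) := by
  choose γ hγ using fun i => exists_isWeightedLeadingForm_lform w (f i)
  rw [Algebra.adjoin_range_eq_range_aeval] at hp ⊢
  obtain ⟨P, rfl⟩ := hp
  rcases eq_or_ne P 0 with rfl | hP
  · rw [map_zero, lform_zero]
    exact zero_mem _
  obtain ⟨μ, hμ⟩ :=
    WithBot.ne_bot_iff_exists.mp ((weightedTotalDegree'_eq_bot_iff γ P).not.mpr hP)
  have hQ : aeval (fun i => lform w (f i)) (weightedHomogeneousComponent γ μ P) ≠ 0 :=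
    (map_ne_zero_iff _ hI).mpr (weightedHomogeneousComponent_ne_zero hμ.symm)
  exact ⟨_, ((isWeightedLeadingForm_aeval hγ hμ.ge).lform_eq hQ).symm⟩

end LeadingForm

/-- If `k[f_1,…,f_n] = k[x]`, then `f_1^w, …, f_n^w` are algebraically independent over
`k` if and only if `k[f_1^w,…,f_n^w] = k[x]`. -/
theorem stmt15 (f : Fin n → MvPolynomial (Fin n) k)
    (hf : Algebra.adjoin k (Set.range f) = ⊤) (w : Fin n → Γ) :
    AlgebraicIndependent k (fun i => lform w (f i)) ↔
      Algebra.adjoin k (Set.range fun i => lform w (f i)) = ⊤ := by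
  constructor
  · intro hI
    rw [eq_top_iff, ← MvPolynomial.adjoin_range_X, Algebra.adjoin_le_iff]
    rintro _ ⟨j, rfl⟩
    have hXj : (MvPolynomial.X j : MvPolynomial (Fin n) k) ∈ Algebra.adjoin k (Set.range f) :=
      hf ▸ Algebra.mem_top
    rw [SetLike.mem_coe, ← lform_X w j]
    exact lform_mem_adjoin_lform hI hXj
  · intro htop
    rw [algebraicIndependent_iff_injective_aeval]
    refine RingHom.injective_of_surjective_of_isNoetherianRing
      (MvPolynomial.aeval fun i => lform w (f i) : MvPolynomial (Fin n) k →ₐ[k] _).toRingHom ?_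
    rwa [Algebra.adjoin_range_eq_range_aeval, AlgHom.range_eq_top] at htop
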